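/- arXiv:2001.04754 — 2 statements merged into one kernel-verified Lean document; each statement's English description precedes it below -/
import Mathlib

section
/- Let ρ be a distribution over functions f : X → ℝ, let P_t and P_{1−t} be two probability distributions on X × ℝ whose marginals on X are P_{x,t} and P_{x,1−t}, and assume both have the same conditional distribution of y given x. Suppose D_∞ = sup_x p_{1−t}(x)/p_t(x) < ∞. Writing L(f,x,y) = (f(x) − y)², μ(x) = E_ρ[f(x)], σ²(x) = Var_ρ[f(x)], the Gibbs risk on P_{1−t} satisfies E_{(x,y)∼P_{1−t}} E_ρ[L(f,x,y)] ≤ (1/2)·E_{x∼P_{x,1−t}}[σ²(x)] + D_∞ · E_{(x,y)∼P_t}[(μ(x) − y)² + (1/2)σ²(x)]. -/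
/-!
Pointwise in `(x, y)`, the bias–variance decomposition writes the Gibbs loss as
`σ²(x) + (μ(x) - y)² = ½ σ²(x) + g(x, y)` with `g ≥ 0` the factual loss. The `½ σ²` part only
depends on `x`, so it integrates against the counterfactual marginal. For `g`, the domination
`νx ≤ D • μx` lifts to the joints, `νx ⊗ₘ κ ≤ D • (μx ⊗ₘ κ)`, because both share the kernel `κ`;
integrating the nonnegative `g` then costs at most the factor `D`.
-/

open MeasureTheory ProbabilityTheory

lemma integral_sub_const_sq_eq_sq_add_variance {Ω : Type*} [MeasurableSpace Ω] {μ : Measure Ω}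
    [IsProbabilityMeasure μ] {Y : Ω → ℝ} (hY : MemLp Y 2 μ) (c : ℝ) :
    ∫ ω, (Y ω - c) ^ 2 ∂μ = (μ[Y] - c) ^ 2 + Var[Y; μ] := by
  have hYc : MemLp (fun ω ↦ Y ω - c) 2 μ := hY.sub (memLp_const c)
  have hmean : ∫ ω, (Y ω - c) ∂μ = μ[Y] - c := by
    rw [integral_sub (hY.integrable one_le_two) (integrable_const c), integral_const]
    simp
  have hvar := variance_eq_sub hYc
  rw [variance_sub_const hY.aestronglyMeasurable, hmean] at hvar
  simp only [Pi.pow_apply] at hvar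
  linarith

namespace MeasureTheory.Measure

lemma compProd_mono_left {α β : Type*} [MeasurableSpace α] [MeasurableSpace β]
    {μ ν : Measure α} [SFinite μ] [SFinite ν] (κ : Kernel α β) [IsSFiniteKernel κ]
    (h : μ ≤ ν) : μ ⊗ₘ κ ≤ ν ⊗ₘ κ := by
  refine le_iff.2 fun s hs ↦ ?_
  rw [compProd_apply hs, compProd_apply hs]
  exact lintegral_mono' h le_rfl

section

variable {α β E : Type*} [MeasurableSpace α] [MeasurableSpace β]
  [NormedAddCommGroup E]
  (μ : Measure α) [SFinite μ] (κ : Kernel α β) [IsMarkovKernel κ] {f : α → E}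

lemma integrable_comp_fst_compProd (hf : Integrable f μ) :
    Integrable (fun p ↦ f p.1) (μ ⊗ₘ κ) := by
  rw [← fst_compProd μ κ] at hf
  exact (integrable_map_measure hf.aestronglyMeasurable measurable_fst.aemeasurable).mp hf

lemma integral_comp_fst_compProd [NormedSpace ℝ E] (hf : AEStronglyMeasurable f μ) :
    ∫ p, f p.1 ∂(μ ⊗ₘ κ) = ∫ a, f a ∂μ := by
  rw [← fst_compProd μ κ] at hf
  calc ∫ p, f p.1 ∂(μ ⊗ₘ κ) = ∫ a, f a ∂(μ ⊗ₘ κ).fst :=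
        (integral_map measurable_fst.aemeasurable hf).symm
    _ = ∫ a, f a ∂μ := by rw [fst_compProd]

end

end MeasureTheory.Measure

lemma integral_le_mul_integral_of_le_smul {α : Type*} [MeasurableSpace α] {μ ν : Measure α}
    {c : ℝ} (hc : 0 ≤ c) (hle : ν ≤ ENNReal.ofReal c • μ) {f : α → ℝ} (hf0 : 0 ≤ᵐ[μ] f)
    (hf : Integrable f μ) :
    ∫ a, f a ∂ν ≤ c * ∫ a, f a ∂μ := by
  calc ∫ a, f a ∂ν ≤ ∫ a, f a ∂(ENNReal.ofReal c • μ) :=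
        integral_mono_measure hle (Measure.ae_smul_measure hf0 _)
          (hf.smul_measure ENNReal.ofReal_ne_top)
    _ = c * ∫ a, f a ∂μ := by
        rw [integral_smul_measure, ENNReal.toReal_ofReal hc, smul_eq_mul]

theorem stmt3_general {X : Type*} [MeasurableSpace X]
    (ρ : Measure (X → ℝ)) [IsProbabilityMeasure ρ]
    (μx νx : Measure X) [IsProbabilityMeasure μx] [IsProbabilityMeasure νx]
    (κ : Kernel X ℝ) [IsMarkovKernel κ]
    (D : ℝ) (hD0 : 0 ≤ D) (hD : νx ≤ (ENNReal.ofReal D) • μx)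
    (μf σ2 : X → ℝ)
    (hμf : ∀ x, μf x = ∫ f, f x ∂ρ)
    (hσ2 : ∀ x, σ2 x = variance (fun f : X → ℝ => f x) ρ)
    (hsq : ∀ x, MemLp (fun f : X → ℝ => f x) 2 ρ)
    (hint2 : Integrable σ2 νx)
    (hint3 : Integrable (fun p : X × ℝ => (μf p.1 - p.2) ^ 2 + (1 / 2) * σ2 p.1) (μx ⊗ₘ κ)) :
    ∫ p, ∫ f, (f p.1 - p.2) ^ 2 ∂ρ ∂(νx ⊗ₘ κ)
      ≤ (1 / 2) * ∫ x, σ2 x ∂νx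
        + D * ∫ p, ((μf p.1 - p.2) ^ 2 + (1 / 2) * σ2 p.1) ∂(μx ⊗ₘ κ) := by
  set g : X × ℝ → ℝ := fun p ↦ (μf p.1 - p.2) ^ 2 + (1 / 2) * σ2 p.1
  have hloss (p : X × ℝ) : ∫ f, (f p.1 - p.2) ^ 2 ∂ρ = (1 / 2) * σ2 p.1 + g p := by
    rw [integral_sub_const_sq_eq_sq_add_variance (hsq p.1), ← hμf, ← hσ2]
    ring
  have hg0 : 0 ≤ g := fun p ↦ by
    have : 0 ≤ σ2 p.1 := hσ2 p.1 ▸ variance_nonneg _ _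
    positivity
  have hle : νx ⊗ₘ κ ≤ ENNReal.ofReal D • (μx ⊗ₘ κ) := by
    rw [← Measure.compProd_smul_left]
    exact Measure.compProd_mono_left κ hD
  have hg_int : Integrable g (νx ⊗ₘ κ) :=
    (hint3.smul_measure ENNReal.ofReal_ne_top).mono_measure hle
  calc ∫ p, ∫ f, (f p.1 - p.2) ^ 2 ∂ρ ∂(νx ⊗ₘ κ)
      = ∫ p, ((1 / 2) * σ2 p.1 + g p) ∂(νx ⊗ₘ κ) := by simp_rw [hloss]
    _ = (1 / 2) * ∫ x, σ2 x ∂νx + ∫ p, g p ∂(νx ⊗ₘ κ) := by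
        rw [integral_add ((Measure.integrable_comp_fst_compProd νx κ hint2).const_mul _) hg_int,
          integral_const_mul, Measure.integral_comp_fst_compProd νx κ hint2.aestronglyMeasurable]
    _ ≤ _ := by
        gcongr
        exact integral_le_mul_integral_of_le_smul hD0 hle (ae_of_all _ hg0) hint3

/-- Theorem 2 of the paper. `μx` and `νx` are the factual and counterfactual covariate
distributions, `κ` is the (shared) conditional distribution of `y` given `x`, so that the
factual joint is `μx ⊗ₘ κ` and the counterfactual joint is `νx ⊗ₘ κ`. If the density ratio
of `νx` w.r.t. `μx` is bounded by `D` (i.e. `νx ≤ D • μx`), then the counterfactual Gibbs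
risk is bounded by half the expected counterfactual variance plus `D` times the expected
factual loss. -/
theorem stmt3 {X : Type*} [MeasurableSpace X]
    (ρ : Measure (X → ℝ)) [IsProbabilityMeasure ρ]
    (μx νx : Measure X) [IsProbabilityMeasure μx] [IsProbabilityMeasure νx]
    (κ : Kernel X ℝ) [IsMarkovKernel κ]
    (D : ℝ) (hD0 : 0 ≤ D) (hD : νx ≤ (ENNReal.ofReal D) • μx)
    (μf σ2 : X → ℝ)
    (hμf : ∀ x, μf x = ∫ f, f x ∂ρ)
    (hσ2 : ∀ x, σ2 x = variance (fun f : X → ℝ => f x) ρ)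
    (hsq : ∀ x, MemLp (fun f : X → ℝ => f x) 2 ρ)
    (hint1 : Integrable (fun p : X × ℝ => ∫ f, (f p.1 - p.2) ^ 2 ∂ρ) (νx ⊗ₘ κ))
    (hint2 : Integrable σ2 νx)
    (hint3 : Integrable (fun p : X × ℝ => (μf p.1 - p.2) ^ 2 + (1 / 2) * σ2 p.1) (μx ⊗ₘ κ)) :
    ∫ p, ∫ f, (f p.1 - p.2) ^ 2 ∂ρ ∂(νx ⊗ₘ κ)
      ≤ (1 / 2) * ∫ x, σ2 x ∂νx
        + D * ∫ p, ((μf p.1 - p.2) ^ 2 + (1 / 2) * σ2 p.1) ∂(μx ⊗ₘ κ) :=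
  stmt3_general ρ μx νx κ D hD0 hD μf σ2 hμf hσ2 hsq hint2 hint3
end

section
/- Let y ∈ ℝⁿ, Φ ∈ ℝ^{n×d}, β, λ > 0, and let ρ = N(m, K⁻¹) with K = β ΦᵀΦ + λ I and m = β K⁻¹ Φᵀ y be the posterior, and π = N(0, λ⁻¹ I) the prior. Then the negative log marginal likelihood satisfies −log p(y | Φ) = (n/2) log(2π β⁻¹) + KL(ρ‖π) + (nβ/2)[ (1/n) Σᵢ σ²(xᵢ) + (1/n) Σᵢ (μ(xᵢ) − yᵢ)² ], where μ(xᵢ) = mᵀφ(xᵢ) and σ²(xᵢ) = φ(xᵢ)ᵀ K⁻¹ φ(xᵢ). -/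
/-!
Up to constants, likelihood times prior is `exp (-E w / 2)` with
`E w = β ‖Φ w - y‖² + λ ‖w‖²`. Since `K = β ΦᵀΦ + λ I` and `K m = β Φᵀ y`, completing the square
gives `E w = (w - m)ᵀ K (w - m) + E m`, so the Gaussian integral is
`(β / 2π)^(n/2) λ^(d/2) det(K)^(-1/2) exp (-E m / 2)`. On the other side `Σᵢ σ²(xᵢ) = tr (K⁻¹ΦᵀΦ)`
and `β tr (K⁻¹ΦᵀΦ) = d - λ tr K⁻¹`, so the trace terms of the KL divergence cancel against the
posterior variances and both sides reduce to `(n/2) log (2π/β) + ½ log (det K / λ^d) + ½ E m`.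
-/

open MeasureTheory Matrix Real

section Algebra

variable {ι κ : Type*} [Fintype ι] [Fintype κ]

theorem sub_dotProduct_sub_self {R : Type*} [CommRing R] (u v : ι → R) :
    (u - v) ⬝ᵥ (u - v) = u ⬝ᵥ u - 2 * (u ⬝ᵥ v) + v ⬝ᵥ v := by
  rw [sub_dotProduct, dotProduct_sub, dotProduct_sub, dotProduct_comm v u]
  ring

theorem sub_dotProduct_mulVec_sub_of_isSymm {R : Type*} [CommRing R] {K : Matrix ι ι R}
    (hK : K.IsSymm) (w m : ι → R) :
    (w - m) ⬝ᵥ (K *ᵥ (w - m)) = w ⬝ᵥ (K *ᵥ w) - 2 * (w ⬝ᵥ (K *ᵥ m)) + m ⬝ᵥ (K *ᵥ m) := by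
  have hswap : m ⬝ᵥ (K *ᵥ w) = w ⬝ᵥ (K *ᵥ m) := by
    rw [dotProduct_mulVec, ← mulVec_transpose, hK.eq, dotProduct_comm]
  rw [mulVec_sub, sub_dotProduct, dotProduct_sub, dotProduct_sub, hswap]
  ring

theorem sum_dotProduct_mulVec_eq_trace (Φ : Matrix ι κ ℝ) (A : Matrix κ κ ℝ) :
    ∑ i, Φ i ⬝ᵥ (A *ᵥ Φ i) = trace (A * (Φᵀ * Φ)) := by
  simp only [trace, diag, mul_apply, mulVec, dotProduct, transpose_apply, Finset.mul_sum]
  rw [Finset.sum_comm]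
  refine Finset.sum_congr rfl fun j _ => ?_
  rw [Finset.sum_comm]
  exact Finset.sum_congr rfl fun k _ => Finset.sum_congr rfl fun i _ => by ring

theorem sum_sub_sq_eq_sub_dotProduct_sub (Φ : Matrix ι κ ℝ) (m : κ → ℝ) (y : ι → ℝ) :
    ∑ i, (m ⬝ᵥ Φ i - y i) ^ 2 = (Φ *ᵥ m - y) ⬝ᵥ (Φ *ᵥ m - y) := by
  simp only [dotProduct_comm m, sq]
  rfl

end Algebra

theorem mul_div_two_mul_mean_add_mean (n : ℕ) (c : ℝ) (a b : Fin n → ℝ) :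
    n * c / 2 * (1 / n * ∑ i, a i + 1 / n * ∑ i, b i) = c / 2 * (∑ i, a i + ∑ i, b i) := by
  rcases n.eq_zero_or_pos with rfl | hn
  · simp
  · field_simp

theorem integral_exp_neg_half_dotProduct_self (ι : Type*) [Fintype ι] :
    ∫ v : ι → ℝ, rexp (-(1 / 2) * (v ⬝ᵥ v)) = (2 * π) ^ ((Fintype.card ι : ℝ) / 2) := by
  rw [← (EuclideanSpace.volume_preserving_symm_measurableEquiv_toLp ι).integral_comp']
  have hnorm (v : EuclideanSpace ℝ ι) : WithLp.ofLp v ⬝ᵥ WithLp.ofLp v = ‖v‖ ^ 2 := by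
    rw [← real_inner_self_eq_norm_sq, EuclideanSpace.inner_eq_star_dotProduct, star_trivial]
  simp only [MeasurableEquiv.toLp_symm_apply, hnorm]
  rw [GaussianFourier.integral_rexp_neg_mul_sq_norm (by norm_num), finrank_euclideanSpace]
  congr 1
  ring

open scoped MatrixOrder in
theorem integral_exp_neg_half_quadForm {ι : Type*} [Fintype ι] [DecidableEq ι]
    {K : Matrix ι ι ℝ} (hK : K.PosDef) (m : ι → ℝ) :
    ∫ w : ι → ℝ, rexp (-(1 / 2) * ((w - m) ⬝ᵥ (K *ᵥ (w - m))))
      = (2 * π) ^ ((Fintype.card ι : ℝ) / 2) / √K.det := by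
  rw [integral_sub_right_eq_self (fun w => rexp (-(1 / 2) * (w ⬝ᵥ (K *ᵥ w)))) m]
  obtain ⟨B, hKB⟩ := CStarAlgebra.nonneg_iff_eq_star_mul_self.mp hK.posSemidef.nonneg
  rw [star_eq_conjTranspose, conjTranspose_eq_transpose_of_trivial] at hKB
  have hdet : K.det = B.det ^ 2 := by rw [hKB, det_mul, det_transpose, sq]
  have hB : B.det ≠ 0 := fun h => by simpa [hdet, h] using hK.det_pos
  have hquad (w : ι → ℝ) : w ⬝ᵥ (K *ᵥ w) = (B *ᵥ w) ⬝ᵥ (B *ᵥ w) := by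
    rw [hKB, ← mulVec_mulVec, dotProduct_mulVec, vecMul_transpose]
  have hcont : Continuous fun v : ι → ℝ => rexp (-(1 / 2) * (v ⬝ᵥ v)) := by
    unfold dotProduct; fun_prop
  simp only [hquad]
  calc ∫ w : ι → ℝ, rexp (-(1 / 2) * ((B *ᵥ w) ⬝ᵥ (B *ᵥ w)))
      = ∫ v, rexp (-(1 / 2) * (v ⬝ᵥ v)) ∂(Measure.map (toLin' B) volume) :=
        (integral_map (toLin' B).continuous_of_finiteDimensional.aemeasurable
          hcont.aestronglyMeasurable).symm
    _ = |B.det|⁻¹ * ∫ v : ι → ℝ, rexp (-(1 / 2) * (v ⬝ᵥ v)) := by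
        rw [Real.map_matrix_volume_pi_eq_smul_volume_pi hB, integral_smul_measure,
          ENNReal.toReal_ofReal (by positivity), abs_inv, smul_eq_mul]
    _ = (2 * π) ^ ((Fintype.card ι : ℝ) / 2) / √K.det := by
        rw [integral_exp_neg_half_dotProduct_self, hdet, sqrt_sq_eq_abs, inv_mul_eq_div]

section Ridge

variable {ι κ : Type*} [Fintype ι] [Fintype κ] [DecidableEq κ] (Φ : Matrix ι κ ℝ) {β lam : ℝ}

theorem posDef_ridge (hβ : 0 ≤ β) (hlam : 0 < lam) : (β • (Φᵀ * Φ) + lam • 1).PosDef := by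
  refine PosDef.posSemidef_add ?_ (PosDef.one.smul hlam)
  simpa [conjTranspose_eq_transpose_of_trivial] using (posSemidef_conjTranspose_mul_self Φ).smul hβ

theorem dotProduct_ridge_mulVec (w : κ → ℝ) :
    w ⬝ᵥ ((β • (Φᵀ * Φ) + lam • 1) *ᵥ w) = β * ((Φ *ᵥ w) ⬝ᵥ (Φ *ᵥ w)) + lam * (w ⬝ᵥ w) := by
  rw [add_mulVec, smul_mulVec, smul_mulVec, one_mulVec, ← mulVec_mulVec, dotProduct_add,
    dotProduct_smul, dotProduct_smul, dotProduct_mulVec, vecMul_transpose, smul_eq_mul, smul_eq_mul]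

theorem mul_trace_inv_mul_gram {K : Matrix κ κ ℝ} (hK : K = β • (Φᵀ * Φ) + lam • 1)
    (hdet : IsUnit K.det) :
    β * trace (K⁻¹ * (Φᵀ * Φ)) = Fintype.card κ - lam * trace K⁻¹ :=
  calc β * trace (K⁻¹ * (Φᵀ * Φ)) = trace (K⁻¹ * (K - lam • 1)) := by
        rw [hK, add_sub_cancel_right, Matrix.mul_smul, trace_smul, smul_eq_mul]
    _ = Fintype.card κ - lam * trace K⁻¹ := by
        rw [mul_sub, nonsing_inv_mul K hdet, Matrix.mul_smul, mul_one, trace_sub, trace_smul,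
          trace_one, smul_eq_mul]

theorem ridge_energy_complete_square {K : Matrix κ κ ℝ} (hK : K = β • (Φᵀ * Φ) + lam • 1) {y : ι → ℝ}
    {m : κ → ℝ} (hKm : K *ᵥ m = β • (Φᵀ *ᵥ y)) (w : κ → ℝ) :
    β * ((Φ *ᵥ w - y) ⬝ᵥ (Φ *ᵥ w - y)) + lam * (w ⬝ᵥ w)
      = (w - m) ⬝ᵥ (K *ᵥ (w - m)) + (β * ((Φ *ᵥ m - y) ⬝ᵥ (Φ *ᵥ m - y)) + lam * (m ⬝ᵥ m)) := by
  have hsymm : K.IsSymm := by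
    rw [hK, IsSymm, transpose_add, transpose_smul, transpose_smul, transpose_mul,
      transpose_transpose, transpose_one]
  have hquad (v : κ → ℝ) : v ⬝ᵥ (K *ᵥ v) = β * ((Φ *ᵥ v) ⬝ᵥ (Φ *ᵥ v)) + lam * (v ⬝ᵥ v) := by
    rw [hK]; exact dotProduct_ridge_mulVec Φ v
  have hcross (v : κ → ℝ) : v ⬝ᵥ (K *ᵥ m) = β * ((Φ *ᵥ v) ⬝ᵥ y) := by
    rw [hKm, dotProduct_smul, smul_eq_mul, dotProduct_mulVec, vecMul_transpose]
  rw [sub_dotProduct_mulVec_sub_of_isSymm hsymm, hquad w, hcross w, sub_dotProduct_sub_self,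
    sub_dotProduct_sub_self]
  linear_combination hquad m - 2 * hcross m

theorem integral_gaussianLikelihood_mul_prior (hβ : 0 < β) (hlam : 0 < lam) {K : Matrix κ κ ℝ}
    (hK : K = β • (Φᵀ * Φ) + lam • 1) {y : ι → ℝ} {m : κ → ℝ} (hKm : K *ᵥ m = β • (Φᵀ *ᵥ y)) :
    ∫ w : κ → ℝ,
        ((β / (2 * π)) ^ ((Fintype.card ι : ℝ) / 2)
            * rexp (-(β / 2) * ((Φ *ᵥ w - y) ⬝ᵥ (Φ *ᵥ w - y))))
        * ((lam / (2 * π)) ^ ((Fintype.card κ : ℝ) / 2) * rexp (-(lam / 2) * (w ⬝ᵥ w)))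
      = (β / (2 * π)) ^ ((Fintype.card ι : ℝ) / 2) * lam ^ ((Fintype.card κ : ℝ) / 2) / √K.det
          * rexp (-(1 / 2) * (β * ((Φ *ᵥ m - y) ⬝ᵥ (Φ *ᵥ m - y)) + lam * (m ⬝ᵥ m))) := by
  set Em := β * ((Φ *ᵥ m - y) ⬝ᵥ (Φ *ᵥ m - y)) + lam * (m ⬝ᵥ m)
  have hexp (w : κ → ℝ) : -(β / 2) * ((Φ *ᵥ w - y) ⬝ᵥ (Φ *ᵥ w - y)) + -(lam / 2) * (w ⬝ᵥ w)
      = -(1 / 2) * Em + -(1 / 2) * ((w - m) ⬝ᵥ (K *ᵥ (w - m))) := by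
    linear_combination (-1 / 2 : ℝ) * ridge_energy_complete_square Φ hK hKm w
  simp_rw [mul_mul_mul_comm _ (rexp _), ← exp_add, hexp, exp_add, ← mul_assoc]
  rw [integral_const_mul, integral_exp_neg_half_quadForm (hK ▸ posDef_ridge Φ hβ.le hlam),
    div_rpow hlam.le (by positivity)]
  field_simp

theorem neg_log_integral_gaussianLikelihood_mul_prior (hβ : 0 < β) (hlam : 0 < lam)
    {K : Matrix κ κ ℝ} (hK : K = β • (Φᵀ * Φ) + lam • 1) {y : ι → ℝ} {m : κ → ℝ}
    (hKm : K *ᵥ m = β • (Φᵀ *ᵥ y)) :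
    -Real.log (∫ w : κ → ℝ,
        ((β / (2 * π)) ^ ((Fintype.card ι : ℝ) / 2)
            * rexp (-(β / 2) * ((Φ *ᵥ w - y) ⬝ᵥ (Φ *ᵥ w - y))))
        * ((lam / (2 * π)) ^ ((Fintype.card κ : ℝ) / 2) * rexp (-(lam / 2) * (w ⬝ᵥ w))))
      = (Fintype.card ι : ℝ) / 2 * Real.log (2 * π * β⁻¹)
        + 1 / 2 * Real.log (K.det / lam ^ Fintype.card κ)
        + 1 / 2 * (β * ((Φ *ᵥ m - y) ⬝ᵥ (Φ *ᵥ m - y)) + lam * (m ⬝ᵥ m)) := by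
  have hdet : 0 < K.det := (hK ▸ posDef_ridge Φ hβ.le hlam).det_pos
  rw [integral_gaussianLikelihood_mul_prior Φ hβ hlam hK hKm, log_mul (by positivity) (by positivity),
    log_div (by positivity) (by positivity), log_mul (by positivity) (by positivity), log_exp,
    log_rpow (by positivity), log_rpow hlam, log_sqrt hdet.le, log_div hdet.ne' (by positivity),
    log_pow, log_div hβ.ne' (by positivity), log_mul (x := 2 * π) (by positivity) (by positivity),
    log_inv]
  ring

end Ridge

theorem stmt12_general (n d : ℕ) (Φ : Matrix (Fin n) (Fin d) ℝ) (y : Fin n → ℝ)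
    (β lam : ℝ) (hβ : 0 < β) (hlam : 0 < lam)
    (K : Matrix (Fin d) (Fin d) ℝ)
    (hK : K = β • (Φᵀ * Φ) + lam • (1 : Matrix (Fin d) (Fin d) ℝ))
    (m : Fin d → ℝ) (hm : m = β • (K⁻¹ *ᵥ (Φᵀ *ᵥ y)))
    (μp σ2 : Fin n → ℝ)
    (hμp : ∀ i, μp i = m ⬝ᵥ (fun j => Φ i j))
    (hσ2 : ∀ i, σ2 i = (fun j => Φ i j) ⬝ᵥ (K⁻¹ *ᵥ (fun j => Φ i j)))
    (KLρπ : ℝ)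
    (hKL : KLρπ = (1 / 2) * (lam * (K⁻¹).trace + lam * (m ⬝ᵥ m) - d
        + Real.log (K.det / lam ^ d))) :
    -Real.log (∫ w : Fin d → ℝ,
        ((β / (2 * π)) ^ ((n : ℝ) / 2)
            * exp (-(β / 2) * ((Φ *ᵥ w - y) ⬝ᵥ (Φ *ᵥ w - y))))
        * ((lam / (2 * π)) ^ ((d : ℝ) / 2) * exp (-(lam / 2) * (w ⬝ᵥ w))))
      = ((n : ℝ) / 2) * Real.log (2 * π * β⁻¹) + KLρπ
        + ((n : ℝ) * β / 2)
          * ((1 / (n : ℝ)) * ∑ i, σ2 i + (1 / (n : ℝ)) * ∑ i, (μp i - y i) ^ 2) := by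
  have hdet : IsUnit K.det :=
    (isUnit_iff_isUnit_det K).mp (hK ▸ posDef_ridge Φ hβ.le hlam).isUnit
  have hKm : K *ᵥ m = β • (Φᵀ *ᵥ y) := by
    rw [hm, mulVec_smul, mulVec_mulVec, mul_nonsing_inv K hdet, one_mulVec]
  have hσ : ∑ i, σ2 i = trace (K⁻¹ * (Φᵀ * Φ)) := by
    simp only [hσ2]
    exact sum_dotProduct_mulVec_eq_trace Φ K⁻¹
  have hμ : ∑ i, (μp i - y i) ^ 2 = (Φ *ᵥ m - y) ⬝ᵥ (Φ *ᵥ m - y) := by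
    simp only [hμp]
    exact sum_sub_sq_eq_sub_dotProduct_sub Φ m y
  have htr := mul_trace_inv_mul_gram Φ hK hdet
  have hnll := neg_log_integral_gaussianLikelihood_mul_prior Φ hβ hlam hK hKm (y := y)
  simp only [Fintype.card_fin] at htr hnll
  rw [hnll, hKL, mul_div_two_mul_mean_add_mean, hσ, hμ]
  linear_combination (-1 / 2 : ℝ) * htr

/-- Equation 9 of the paper: the negative log marginal likelihood of Bayesian linear
regression decomposes as a constant, plus the Gaussian KL divergence between the posterior
`ρ = N(m, K⁻¹)` and the prior `π = N(0, λ⁻¹ I)` (written in closed form), plus `nβ/2` times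
the sum of the average posterior variance and the average squared error of the posterior
mean on the training points.  The marginal likelihood `p(y | Φ)` is the integral over `w`
of the Gaussian likelihood times the Gaussian prior density. -/
theorem stmt12 (n d : ℕ) (hn : 0 < n) (Φ : Matrix (Fin n) (Fin d) ℝ) (y : Fin n → ℝ)
    (β lam : ℝ) (hβ : 0 < β) (hlam : 0 < lam)
    (K : Matrix (Fin d) (Fin d) ℝ)
    (hK : K = β • (Φᵀ * Φ) + lam • (1 : Matrix (Fin d) (Fin d) ℝ))
    (m : Fin d → ℝ) (hm : m = β • (K⁻¹ *ᵥ (Φᵀ *ᵥ y)))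
    (μp σ2 : Fin n → ℝ)
    (hμp : ∀ i, μp i = m ⬝ᵥ (fun j => Φ i j))
    (hσ2 : ∀ i, σ2 i = (fun j => Φ i j) ⬝ᵥ (K⁻¹ *ᵥ (fun j => Φ i j)))
    (KLρπ : ℝ)
    (hKL : KLρπ = (1 / 2) * (lam * (K⁻¹).trace + lam * (m ⬝ᵥ m) - d
        + Real.log (K.det / lam ^ d))) :
    -Real.log (∫ w : Fin d → ℝ,
        ((β / (2 * π)) ^ ((n : ℝ) / 2)
            * exp (-(β / 2) * ((Φ *ᵥ w - y) ⬝ᵥ (Φ *ᵥ w - y))))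
        * ((lam / (2 * π)) ^ ((d : ℝ) / 2) * exp (-(lam / 2) * (w ⬝ᵥ w))))
      = ((n : ℝ) / 2) * Real.log (2 * π * β⁻¹) + KLρπ
        + ((n : ℝ) * β / 2)
          * ((1 / (n : ℝ)) * ∑ i, σ2 i + (1 / (n : ℝ)) * ∑ i, (μp i - y i) ^ 2) :=
  stmt12_general n d Φ y β lam hβ hlam K hK m hm μp σ2 hμp hσ2 KLρπ hKL
end
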